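/- arXiv:2112.08535 — 4 statements merged into one kernel-verified Lean document; each statement's English description precedes it below -/
import Mathlib

section
/- Let α > 0 be a real number and let x : ℤ → ℝ^n be a two-sided sequence that is uniformly bounded, i.e., there exists M ≥ 0 with ‖x[k]‖ ≤ M for all k ∈ ℤ. Then for every k ∈ ℤ the Grünwald–Letnikov fractional-order difference Δ^α x[k] := ∑_{j=0}^{∞} c_j^α · x[k−j] is well defined: the series ∑_{j=0}^{∞} c_j^α · x[k−j] converges absolutely in ℝ^n. -/
/-! Once `α ≤ j`, the ratio `|binom(α, j+1)| / |binom(α, j)| = (j - α)/(j + 1)` is exactly of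
Raabe's form `1 - (1 + α)/(j + 1)`, so the absolute coefficients are summable for `α > 0` and
the series is dominated by `M ∑ |binom(α, j)|`. Raabe's test is proved by telescoping:
`α aⱼ ≤ j aⱼ - (j + 1) aⱼ₊₁`. -/

/-- Generalized binomial coefficient `binom(α, j) = ∏_{i=0}^{j-1} (α - i)/(i + 1)`. -/
noncomputable def glBinom (α : ℝ) (j : ℕ) : ℝ :=
  ∏ i ∈ Finset.range j, (α - i) / (i + 1)

/-- Grünwald–Letnikov coefficient `c_j^α = (-1)^j · binom(α, j)`. -/
noncomputable def glCoeff (α : ℝ) (j : ℕ) : ℝ :=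
  (-1 : ℝ) ^ j * glBinom α j

open Finset

theorem summable_of_le_sub_succ {a b : ℕ → ℝ} {c : ℝ} (hc : 0 < c) (ha : ∀ j, 0 ≤ a j)
    (hb : ∀ j, 0 ≤ b j) (m : ℕ) (hab : ∀ j, m ≤ j → c * a j ≤ b j - b (j + 1)) :
    Summable a := by
  rw [← summable_nat_add_iff m]
  refine summable_of_sum_range_le (c := b m / c) (fun j => ha _) fun N => ?_
  have htel : c * ∑ i ∈ range N, a (i + m) ≤ b m - b (N + m) := by
    calc c * ∑ i ∈ range N, a (i + m)
        ≤ ∑ i ∈ range N, (b (i + m) - b (i + 1 + m)) := by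
          rw [mul_sum]
          exact sum_le_sum fun i _ => by
            simpa [add_right_comm] using hab (i + m) (Nat.le_add_left m i)
      _ = b m - b (N + m) := by
          simpa using sum_range_sub' (fun i => b (i + m)) N
  rw [le_div_iff₀' hc]
  linarith [hb (N + m)]

theorem summable_of_raabe {a : ℕ → ℝ} {α : ℝ} (hα : 0 < α) (ha : ∀ j, 0 ≤ a j) (m : ℕ)
    (hratio : ∀ j, m ≤ j → (j + 1) * a (j + 1) ≤ (j - α) * a j) :
    Summable a := by
  refine summable_of_le_sub_succ hα ha (b := fun j => j * a j)
    (fun j => mul_nonneg j.cast_nonneg (ha j)) m fun j hj => ?_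
  have := hratio j hj
  push_cast
  linarith

theorem glBinom_succ (α : ℝ) (j : ℕ) :
    glBinom α (j + 1) = glBinom α j * ((α - j) / (j + 1)) :=
  prod_range_succ _ j

theorem succ_mul_abs_glBinom_succ {α : ℝ} {j : ℕ} (hj : α ≤ j) :
    (j + 1) * |glBinom α (j + 1)| = (j - α) * |glBinom α j| := by
  rw [glBinom_succ, abs_mul, abs_div, abs_sub_comm, abs_of_nonneg (sub_nonneg.2 hj),
    abs_of_pos (by positivity : (0 : ℝ) < j + 1)]
  field_simp

theorem summable_abs_glBinom {α : ℝ} (hα : 0 < α) : Summable fun j => |glBinom α j| :=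
  summable_of_raabe hα (fun _ => abs_nonneg _) ⌈α⌉₊ fun j hj =>
    (succ_mul_abs_glBinom_succ ((Nat.le_ceil α).trans (by exact_mod_cast hj))).le

theorem norm_glCoeff (α : ℝ) (j : ℕ) : ‖glCoeff α j‖ = |glBinom α j| := by
  simp [glCoeff]

theorem glDifference_abs_convergent_general (n : ℕ) (α : ℝ) (hα : 0 < α)
    (x : ℤ → EuclideanSpace ℝ (Fin n))
    (M : ℝ) (hbd : ∀ k : ℤ, ‖x k‖ ≤ M) :
    ∀ k : ℤ, Summable (fun j : ℕ => ‖glCoeff α j • x (k - (j : ℤ))‖) := by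
  intro k
  refine ((summable_abs_glBinom hα).mul_right M).of_nonneg_of_le (fun _ => norm_nonneg _)
    fun j => ?_
  rw [norm_smul, norm_glCoeff]
  exact mul_le_mul_of_nonneg_left (hbd _) (abs_nonneg _)

/-- For `α > 0` and a uniformly bounded two-sided sequence `x : ℤ → ℝ^n`, the
Grünwald–Letnikov fractional-order difference
`Δ^α x[k] = ∑_{j=0}^{∞} c_j^α · x[k−j]` is well defined for every `k`:
the series converges absolutely in `ℝ^n`. -/
theorem glDifference_abs_convergent (n : ℕ) (α : ℝ) (hα : 0 < α)
    (x : ℤ → EuclideanSpace ℝ (Fin n))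
    (M : ℝ) (hM : 0 ≤ M) (hbd : ∀ k : ℤ, ‖x k‖ ≤ M) :
    ∀ k : ℤ, Summable (fun j : ℕ => ‖glCoeff α j • x (k - (j : ℤ))‖) :=
  glDifference_abs_convergent_general n α hα x M hbd
end

section
/- Let (A_j)_{j ∈ ℕ} be matrices in ℝ^{n×n}, B ∈ ℝ^{n×m}, define G_0 = I_n and G_k = ∑_{j=0}^{k-1} A_j G_{k-1-j} for k ≥ 1, and fix K ≥ 1 and an initial state x_0 ∈ ℝ^n. Suppose the controllability Gramian W := ∑_{j=0}^{K-1} G_j B Bᵀ G_jᵀ is invertible. Define the input sequence u[k] := −Bᵀ G_{K-1-k}ᵀ W^{-1} G_K x_0 for 0 ≤ k ≤ K−1. Then the trajectory x : ℕ → ℝ^n determined by x[0] = x_0 and x[k+1] = ∑_{j=0}^{k} A_j x[k−j] + B u[k] satisfies x[K] = 0; in particular, the discrete-time fractional-order system is controllable at time K from any initial state. -/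
open Matrix

/-- State-transition matrices: `G_0 = I` and `G_k = ∑_{j=0}^{k-1} A_j G_{k-1-j}` for `k ≥ 1`. -/
noncomputable def Gmat {n : ℕ} (A : ℕ → Matrix (Fin n) (Fin n) ℝ) : ℕ → Matrix (Fin n) (Fin n) ℝ
  | 0 => 1
  | k + 1 => ∑ j ∈ Finset.range (k + 1), A j * Gmat A (k - j)
  decreasing_by exact Nat.lt_succ_of_le (Nat.sub_le _ _)

/-! By variation of constants, `x[K] = G_K x₀ + ∑_{i<K} G_{K-1-i} B u[i]`. Substituting the
input turns the sum into `-(∑_{i<K} G_{K-1-i} B Bᵀ G_{K-1-i}ᵀ) W⁻¹ G_K x₀`; reversing the order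
of summation makes the bracket the Gramian `W`, so the two terms cancel. -/

namespace Gmat

variable {n : ℕ} (A : ℕ → Matrix (Fin n) (Fin n) ℝ)

theorem zero : Gmat A 0 = 1 := by
  rw [Gmat]

theorem succ (k : ℕ) : Gmat A (k + 1) = ∑ j ∈ Finset.range (k + 1), A j * Gmat A (k - j) := by
  rw [Gmat]

theorem sub_eq_sum {i k : ℕ} (hik : i < k) :
    Gmat A (k - i) = ∑ j ∈ Finset.range (k - i), A j * Gmat A (k - i - 1 - j) := by
  obtain ⟨d, rfl⟩ : ∃ d, k = i + d + 1 := ⟨k - i - 1, by omega⟩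
  rw [show i + d + 1 - i = d + 1 by omega, succ]
  simp only [Nat.add_sub_cancel]

theorem trajectory_eq (x f : ℕ → Fin n → ℝ)
    (hx : ∀ k, x (k + 1) = ∑ j ∈ Finset.range (k + 1), A j *ᵥ x (k - j) + f k) (k : ℕ) :
    x k = Gmat A k *ᵥ x 0 + ∑ i ∈ Finset.range k, Gmat A (k - 1 - i) *ᵥ f i := by
  induction k using Nat.strong_induction_on with
  | _ k ih =>
    rcases k with _ | k
    · simp [zero]
    have hstep : ∀ j ∈ Finset.range (k + 1), A j *ᵥ x (k - j) = (A j * Gmat A (k - j)) *ᵥ x 0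
        + ∑ i ∈ Finset.range (k - j), A j *ᵥ (Gmat A (k - j - 1 - i) *ᵥ f i) := fun j _ => by
      rw [ih (k - j) (by omega), mulVec_add, mulVec_mulVec, mulVec_sum]
    have hswap : ∑ j ∈ Finset.range (k + 1), ∑ i ∈ Finset.range (k - j),
          A j *ᵥ (Gmat A (k - j - 1 - i) *ᵥ f i)
        = ∑ i ∈ Finset.range k, Gmat A (k - i) *ᵥ f i := by
      rw [Finset.sum_comm' (t' := Finset.range k) (s' := fun i => Finset.range (k - i))
        (by intro j i; simp only [Finset.mem_range]; omega)]
      refine Finset.sum_congr rfl fun i hi => ?_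
      rw [sub_eq_sum A (Finset.mem_range.mp hi), sum_mulVec]
      refine Finset.sum_congr rfl fun j _ => ?_
      rw [← mulVec_mulVec, show k - j - 1 - i = k - i - 1 - j by omega]
    rw [hx, Finset.sum_congr rfl hstep, Finset.sum_add_distrib, ← sum_mulVec, ← succ, hswap,
      Finset.sum_range_succ, Nat.add_sub_cancel, Nat.sub_self, zero, one_mulVec, add_assoc]

end Gmat

theorem sum_gramian_control_eq_neg {ι κ R : Type*} [Fintype ι] [DecidableEq ι] [Fintype κ]
    [CommRing R] (M : ℕ → Matrix ι ι R) (B : Matrix ι κ R) (K : ℕ) (W : Matrix ι ι R)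
    (hW : W = ∑ j ∈ Finset.range K, M j * B * Bᵀ * (M j)ᵀ) (hWinv : IsUnit W.det) (y : ι → R) :
    ∑ i ∈ Finset.range K, (M (K - 1 - i) * B) *ᵥ -((Bᵀ * (M (K - 1 - i))ᵀ * W⁻¹) *ᵥ y) = -y := by
  have hreflect : ∑ i ∈ Finset.range K, M (K - 1 - i) * B * Bᵀ * (M (K - 1 - i))ᵀ = W := by
    rw [hW, Finset.sum_range_reflect (fun j => M j * B * Bᵀ * (M j)ᵀ)]
  simp_rw [mulVec_neg, mulVec_mulVec, Finset.sum_neg_distrib, ← sum_mulVec, ← Matrix.mul_assoc,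
    ← Finset.sum_mul, hreflect, mul_nonsing_inv _ hWinv, one_mulVec]

theorem fos_controllability_general (n m K : ℕ)
    (A : ℕ → Matrix (Fin n) (Fin n) ℝ) (B : Matrix (Fin n) (Fin m) ℝ)
    (x0 : Fin n → ℝ)
    (W : Matrix (Fin n) (Fin n) ℝ)
    (hW : W = ∑ j ∈ Finset.range K, Gmat A j * B * Bᵀ * (Gmat A j)ᵀ)
    (hWinv : IsUnit W.det)
    (u : ℕ → Fin m → ℝ)
    (hu : ∀ k : ℕ, k ≤ K - 1 →
      u k = -((Bᵀ * (Gmat A (K - 1 - k))ᵀ * W⁻¹ * Gmat A K).mulVec x0))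
    (x : ℕ → Fin n → ℝ) (hx0 : x 0 = x0)
    (hx : ∀ k : ℕ,
      x (k + 1) = ∑ j ∈ Finset.range (k + 1), (A j).mulVec (x (k - j)) + B.mulVec (u k)) :
    x K = 0 := by
  have hinput : ∀ i ∈ Finset.range K, Gmat A (K - 1 - i) *ᵥ (B *ᵥ u i)
      = (Gmat A (K - 1 - i) * B) *ᵥ -((Bᵀ * (Gmat A (K - 1 - i))ᵀ * W⁻¹) *ᵥ (Gmat A K *ᵥ x0)) :=
    fun i hi => by
      rw [hu i (by have := Finset.mem_range.mp hi; omega)]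
      simp only [mulVec_neg, mulVec_mulVec, Matrix.mul_assoc]
  rw [Gmat.trajectory_eq A x (fun k => B *ᵥ u k) hx, hx0, Finset.sum_congr rfl hinput,
    sum_gramian_control_eq_neg _ B K W hW hWinv, add_neg_cancel]

/-- If the controllability Gramian `W = ∑_{j=0}^{K-1} G_j B Bᵀ G_jᵀ` is invertible and the
input sequence `u[k] = −Bᵀ G_{K-1-k}ᵀ W⁻¹ G_K x_0` (for `0 ≤ k ≤ K−1`) is applied, then
the trajectory starting at `x_0` satisfies `x[K] = 0`: the discrete-time fractional-order
system is controllable at time `K` from any initial state. -/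
theorem fos_controllability (n m K : ℕ) (hK : 1 ≤ K)
    (A : ℕ → Matrix (Fin n) (Fin n) ℝ) (B : Matrix (Fin n) (Fin m) ℝ)
    (x0 : Fin n → ℝ)
    (W : Matrix (Fin n) (Fin n) ℝ)
    (hW : W = ∑ j ∈ Finset.range K, Gmat A j * B * Bᵀ * (Gmat A j)ᵀ)
    (hWinv : IsUnit W.det)
    (u : ℕ → Fin m → ℝ)
    (hu : ∀ k : ℕ, k ≤ K - 1 →
      u k = -((Bᵀ * (Gmat A (K - 1 - k))ᵀ * W⁻¹ * Gmat A K).mulVec x0))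
    (x : ℕ → Fin n → ℝ) (hx0 : x 0 = x0)
    (hx : ∀ k : ℕ,
      x (k + 1) = ∑ j ∈ Finset.range (k + 1), (A j).mulVec (x (k - j)) + B.mulVec (u k)) :
    x K = 0 :=
  fos_controllability_general n m K A B x0 W hW hWinv u hu x hx0 hx
end

section
/- Let (A_j)_{j ∈ ℕ} be matrices in ℝ^{n×n}, B ∈ ℝ^{n×m}, C ∈ ℝ^{q×n}, define G_0 = I_n and G_k = ∑_{j=0}^{k-1} A_j G_{k-1-j} for k ≥ 1, and fix K ≥ 1. Suppose x : ℕ → ℝ^n and u : ℕ → ℝ^m satisfy x[k+1] = ∑_{j=0}^{k} A_j x[k−j] + B u[k] for all k ≥ 0, and let the outputs be y[k] = C x[k] for 0 ≤ k ≤ K−1. If the observability Gramian W_o := ∑_{j=0}^{K-1} G_jᵀ Cᵀ C G_j is invertible, then the initial state is recovered by x[0] = W_o^{-1} · ∑_{k=0}^{K-1} G_kᵀ Cᵀ ( y[k] − ∑_{i=0}^{k-1} C G_{k-1-i} B u[i] ); in particular, the initial state is uniquely determined by the inputs and outputs. -/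
/-!
Unrolling the recursion gives the variation-of-constants formula
`x[k] = G_k x[0] + ∑_{i<k} G_{k-1-i} B u[i]`; the forced part is a convolution whose
inner sums, after exchanging the order of summation over the triangle `j + i < k`, are exactly
the recursion defining `G`. Subtracting the forced part from `y[k]` leaves the free response
`C G_k x[0]`, so the weighted sum of these differences equals `W_o x[0]`.
-/

open Matrix

open Finset

section StateTransition

variable {n m : ℕ} (A : ℕ → Matrix (Fin n) (Fin n) ℝ)

lemma Gmat_zero : Gmat A 0 = 1 := by
  rw [Gmat]

lemma Gmat_succ (k : ℕ) : Gmat A (k + 1) = ∑ j ∈ range (k + 1), A j * Gmat A (k - j) := by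
  rw [Gmat]

lemma sum_mulVec_sum_Gmat_mul_mulVec_add (B : Matrix (Fin n) (Fin m) ℝ) (u : ℕ → Fin m → ℝ)
    (k : ℕ) :
    ∑ j ∈ range (k + 1), A j *ᵥ ∑ i ∈ range (k - j), (Gmat A (k - j - 1 - i) * B) *ᵥ u i
        + B *ᵥ u k
      = ∑ i ∈ range (k + 1), (Gmat A (k - i) * B) *ᵥ u i := by
  rw [sum_range_succ (fun i => (Gmat A (k - i) * B) *ᵥ u i), Nat.sub_self, Gmat_zero,
    Matrix.one_mul]
  congr 1
  simp_rw [mulVec_sum, mulVec_mulVec]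
  rw [sum_comm' (t' := range k) (s' := fun i => range (k - i))
    (fun j i => by simp only [mem_range]; omega)]
  refine sum_congr rfl fun i hi => ?_
  have hsucc : k - i = k - i - 1 + 1 := by
    rw [mem_range] at hi
    omega
  rw [← sum_mulVec, hsucc, Gmat_succ, ← hsucc, Matrix.sum_mul]
  refine congrArg (· *ᵥ u i) (sum_congr rfl fun j _ => ?_)
  rw [Matrix.mul_assoc, show k - j - 1 - i = k - i - 1 - j by omega]

theorem state_eq_Gmat_mulVec_add_sum (B : Matrix (Fin n) (Fin m) ℝ)
    (x : ℕ → Fin n → ℝ) (u : ℕ → Fin m → ℝ)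
    (hx : ∀ k : ℕ, x (k + 1) = ∑ j ∈ range (k + 1), A j *ᵥ x (k - j) + B *ᵥ u k) (k : ℕ) :
    x k = Gmat A k *ᵥ x 0 + ∑ i ∈ range k, (Gmat A (k - 1 - i) * B) *ᵥ u i := by
  induction k using Nat.strong_induction_on with
  | _ k ih =>
    cases k with
    | zero => simp [Gmat_zero]
    | succ k =>
      have hterm : ∀ j ∈ range (k + 1), A j *ᵥ x (k - j) = (A j * Gmat A (k - j)) *ᵥ x 0
          + A j *ᵥ ∑ i ∈ range (k - j), (Gmat A (k - j - 1 - i) * B) *ᵥ u i := fun j _ => by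
        rw [ih (k - j) (by omega), mulVec_add, mulVec_mulVec]
      rw [hx, sum_congr rfl hterm, sum_add_distrib, ← sum_mulVec, ← Gmat_succ, add_assoc,
        sum_mulVec_sum_Gmat_mul_mulVec_add, Nat.add_sub_cancel]

end StateTransition

theorem fos_observability_general (n m q K : ℕ)
    (A : ℕ → Matrix (Fin n) (Fin n) ℝ) (B : Matrix (Fin n) (Fin m) ℝ)
    (C : Matrix (Fin q) (Fin n) ℝ)
    (x : ℕ → Fin n → ℝ) (u : ℕ → Fin m → ℝ)
    (hx : ∀ k : ℕ,
      x (k + 1) = ∑ j ∈ Finset.range (k + 1), (A j).mulVec (x (k - j)) + B.mulVec (u k))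
    (y : ℕ → Fin q → ℝ)
    (hy : ∀ k : ℕ, k ≤ K - 1 → y k = C.mulVec (x k))
    (Wo : Matrix (Fin n) (Fin n) ℝ)
    (hWo : Wo = ∑ j ∈ Finset.range K, (Gmat A j)ᵀ * Cᵀ * C * Gmat A j)
    (hWoInv : IsUnit Wo.det) :
    x 0 = Wo⁻¹.mulVec (∑ k ∈ Finset.range K,
      ((Gmat A k)ᵀ * Cᵀ).mulVec
        (y k - ∑ i ∈ Finset.range k, (C * Gmat A (k - 1 - i) * B).mulVec (u i))) := by
  have hfree : ∀ k ∈ range K,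
      y k - ∑ i ∈ range k, (C * Gmat A (k - 1 - i) * B) *ᵥ u i = C *ᵥ (Gmat A k *ᵥ x 0) := by
    intro k hk
    rw [mem_range] at hk
    rw [hy k (by omega), state_eq_Gmat_mulVec_add_sum A B x u hx k, mulVec_add, mulVec_sum]
    simp only [mulVec_mulVec, Matrix.mul_assoc, add_sub_cancel_right]
  calc x 0 = Wo⁻¹ *ᵥ (Wo *ᵥ x 0) := by
        rw [mulVec_mulVec, nonsing_inv_mul Wo hWoInv, one_mulVec]
    _ = _ := by
        rw [hWo, sum_mulVec]
        refine congrArg _ (sum_congr rfl fun k hk => ?_)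
        rw [hfree k hk]
        simp only [mulVec_mulVec, Matrix.mul_assoc]

/-- If the observability Gramian `W_o = ∑_{j=0}^{K-1} G_jᵀ Cᵀ C G_j` is invertible, then the
initial state of the discrete-time fractional-order system is recovered from the inputs and
outputs by
`x[0] = W_o⁻¹ ∑_{k=0}^{K-1} G_kᵀ Cᵀ ( y[k] − ∑_{i=0}^{k-1} C G_{k-1-i} B u[i] )`. -/
theorem fos_observability (n m q K : ℕ) (hK : 1 ≤ K)
    (A : ℕ → Matrix (Fin n) (Fin n) ℝ) (B : Matrix (Fin n) (Fin m) ℝ)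
    (C : Matrix (Fin q) (Fin n) ℝ)
    (x : ℕ → Fin n → ℝ) (u : ℕ → Fin m → ℝ)
    (hx : ∀ k : ℕ,
      x (k + 1) = ∑ j ∈ Finset.range (k + 1), (A j).mulVec (x (k - j)) + B.mulVec (u k))
    (y : ℕ → Fin q → ℝ)
    (hy : ∀ k : ℕ, k ≤ K - 1 → y k = C.mulVec (x k))
    (Wo : Matrix (Fin n) (Fin n) ℝ)
    (hWo : Wo = ∑ j ∈ Finset.range K, (Gmat A j)ᵀ * Cᵀ * C * Gmat A j)
    (hWoInv : IsUnit Wo.det) :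
    x 0 = Wo⁻¹.mulVec (∑ k ∈ Finset.range K,
      ((Gmat A k)ᵀ * Cᵀ).mulVec
        (y k - ∑ i ∈ Finset.range k, (C * Gmat A (k - 1 - i) * B).mulVec (u i))) :=
  fos_observability_general n m q K A B C x u hx y hy Wo hWo hWoInv
end

section
/- Consider the linear system x̄[k+1] = Ã x̄[k] + B̃ u[k] + G̃ r̄[k] with outputs y[k+1] = C_{k+1} x̄[k+1] + v̄[k+1], where Ã ∈ ℝ^{d×d}, B̃ ∈ ℝ^{d×m}, G̃ ∈ ℝ^{d×p}, C_k ∈ ℝ^{q×d}, with known inputs u[0], …, u[N−1] ∈ ℝ^m and measurements y[1], …, y[N] ∈ ℝ^q, a prior estimate x̂_0 ∈ ℝ^d, and symmetric positive definite weight matrices P_0 ∈ ℝ^{d×d}, Q_i ∈ ℝ^{p×p} (0 ≤ i ≤ N−1), R_j ∈ ℝ^{q×q} (1 ≤ j ≤ N). For a horizon 1 ≤ k ≤ N, call a tuple (x̄[0..k], r̄[0..k−1], v̄[1..k]) feasible if it satisfies the state and output equations above for the given u and y, and define the energy J_k = ∑_{i=0}^{k-1} r̄[i]ᵀ Q_i^{-1}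 r̄[i] + ∑_{j=1}^{k} v̄[j]ᵀ R_j^{-1} v̄[j] + (x̄[0] − x̂_0)ᵀ P_0^{-1} (x̄[0] − x̂_0). Define recursively: x̂[0] = x̂_0; M_{k+1} = Ã P_k Ãᵀ + G̃ Q_k G̃ᵀ; K_{k+1} = M_{k+1} C_{k+1}ᵀ (C_{k+1} M_{k+1} C_{k+1}ᵀ + R_{k+1})^{-1}; P_{k+1} = (I − K_{k+1} C_{k+1}) M_{k+1}; and x̂[k+1] = Ã x̂[k] + B̃ u[k] + K_{k+1} ( y[k+1] − C_{k+1} ( Ã x̂[k] + B̃ u[k] ) ). Then for every horizon 1 ≤ k ≤ N, the minimization of J_k over feasible tuples has a unique minimizer, and the terminal state x̄[k] of this minimizer equals x̂[k]. -/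
open Matrix

/-- Feasibility of a tuple `(x̄[0..k], r̄[0..k−1], v̄[1..k])` for the linear system
`x̄[k+1] = Ã x̄[k] + B̃ u[k] + G̃ r̄[k]`, `y[k+1] = C_{k+1} x̄[k+1] + v̄[k+1]`,
given the inputs `u` and measurements `y`. Here `t.2.2 i` represents `v̄[i+1]`. -/
def MEFeasible {d m p q : ℕ} (Atil : Matrix (Fin d) (Fin d) ℝ)
    (Btil : Matrix (Fin d) (Fin m) ℝ) (Gtil : Matrix (Fin d) (Fin p) ℝ)
    (C : ℕ → Matrix (Fin q) (Fin d) ℝ)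
    (u : ℕ → Fin m → ℝ) (y : ℕ → Fin q → ℝ) (k : ℕ)
    (t : (Fin (k + 1) → Fin d → ℝ) × (Fin k → Fin p → ℝ) × (Fin k → Fin q → ℝ)) : Prop :=
  (∀ i : Fin k,
      t.1 i.succ = Atil.mulVec (t.1 i.castSucc) + Btil.mulVec (u i) + Gtil.mulVec (t.2.1 i)) ∧
  (∀ i : Fin k, y ((i : ℕ) + 1) = (C ((i : ℕ) + 1)).mulVec (t.1 i.succ) + t.2.2 i)

/-- The weighted least-squares energy
`J_k = ∑_{i=0}^{k-1} r̄[i]ᵀ Q_i⁻¹ r̄[i] + ∑_{j=1}^{k} v̄[j]ᵀ R_j⁻¹ v̄[j]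
      + (x̄[0] − x̂₀)ᵀ P₀⁻¹ (x̄[0] − x̂₀)`. -/
noncomputable def MEEnergy {d p q : ℕ} (P0 : Matrix (Fin d) (Fin d) ℝ)
    (Q : ℕ → Matrix (Fin p) (Fin p) ℝ) (R : ℕ → Matrix (Fin q) (Fin q) ℝ)
    (xhat0 : Fin d → ℝ) (k : ℕ)
    (t : (Fin (k + 1) → Fin d → ℝ) × (Fin k → Fin p → ℝ) × (Fin k → Fin q → ℝ)) : ℝ :=
  (∑ i : Fin k, t.2.1 i ⬝ᵥ ((Q (i : ℕ))⁻¹).mulVec (t.2.1 i)) +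
  (∑ i : Fin k, t.2.2 i ⬝ᵥ ((R ((i : ℕ) + 1))⁻¹).mulVec (t.2.2 i)) +
  (t.1 0 - xhat0) ⬝ᵥ (P0⁻¹).mulVec (t.1 0 - xhat0)


lemma dp_transpose {n m : ℕ} (A : Matrix (Fin n) (Fin m) ℝ) (x : Fin n → ℝ) (y : Fin m → ℝ) :
    (Aᵀ *ᵥ x) ⬝ᵥ y = x ⬝ᵥ (A *ᵥ y) := by
  rw [mulVec_transpose, ← dotProduct_mulVec]

lemma dp_symm {n : ℕ} {A : Matrix (Fin n) (Fin n) ℝ} (hA : Aᵀ = A) (a b : Fin n → ℝ) :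
    a ⬝ᵥ (A *ᵥ b) = b ⬝ᵥ (A *ᵥ a) := by
  conv_lhs => rw [← hA]
  rw [dotProduct_comm, dp_transpose]

lemma pd_symm {n : ℕ} {A : Matrix (Fin n) (Fin n) ℝ} (hA : A.PosDef) : Aᵀ = A := by
  have h := hA.1
  ext i j
  have := congrFun (congrFun h i) j
  simpa [conjTranspose_apply] using this

lemma pd_inv_symm {n : ℕ} {A : Matrix (Fin n) (Fin n) ℝ} (hA : A.PosDef) : (A⁻¹)ᵀ = A⁻¹ := by
  rw [transpose_nonsing_inv, pd_symm hA]

lemma pd_isunit {n : ℕ} {A : Matrix (Fin n) (Fin n) ℝ} (hA : A.PosDef) : IsUnit A.det :=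
  isUnit_iff_ne_zero.mpr hA.det_pos.ne'

lemma inv_cancel_vec {n : ℕ} {A : Matrix (Fin n) (Fin n) ℝ} (hA : A.PosDef) (v : Fin n → ℝ) :
    A⁻¹ *ᵥ (A *ᵥ v) = v := by
  rw [mulVec_mulVec, nonsing_inv_mul _ (pd_isunit hA), one_mulVec]

lemma cancel_inv_vec {n : ℕ} {A : Matrix (Fin n) (Fin n) ℝ} (hA : A.PosDef) (v : Fin n → ℝ) :
    A *ᵥ (A⁻¹ *ᵥ v) = v := by
  rw [mulVec_mulVec, mul_nonsing_inv _ (pd_isunit hA), one_mulVec]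

lemma quad_eq {n : ℕ} {A : Matrix (Fin n) (Fin n) ℝ} (hA : A.PosDef) (l : Fin n → ℝ) :
    (A *ᵥ l) ⬝ᵥ (A⁻¹ *ᵥ (A *ᵥ l)) = l ⬝ᵥ (A *ᵥ l) := by
  rw [inv_cancel_vec hA, dotProduct_comm]

lemma quad_lb {n : ℕ} {A : Matrix (Fin n) (Fin n) ℝ} (hA : A.PosDef) (z l : Fin n → ℝ) :
    2 * (l ⬝ᵥ z) - l ⬝ᵥ (A *ᵥ l) ≤ z ⬝ᵥ (A⁻¹ *ᵥ z) := by
  have h0 : 0 ≤ (z - A *ᵥ l) ⬝ᵥ (A⁻¹ *ᵥ (z - A *ᵥ l)) := by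
    simpa only [star_trivial] using hA.inv.posSemidef.dotProduct_mulVec_nonneg (z - A *ᵥ l)
  have hexp : (z - A *ᵥ l) ⬝ᵥ (A⁻¹ *ᵥ (z - A *ᵥ l))
      = z ⬝ᵥ (A⁻¹ *ᵥ z) - 2 * (l ⬝ᵥ z) + l ⬝ᵥ (A *ᵥ l) := by
    have h1 : z ⬝ᵥ (A⁻¹ *ᵥ (A *ᵥ l)) = z ⬝ᵥ l := by rw [inv_cancel_vec hA]
    have h2 : (A *ᵥ l) ⬝ᵥ (A⁻¹ *ᵥ z) = z ⬝ᵥ l := by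
      rw [dp_symm (pd_inv_symm hA), h1]
    have h3 : (A *ᵥ l) ⬝ᵥ (A⁻¹ *ᵥ (A *ᵥ l)) = l ⬝ᵥ (A *ᵥ l) := quad_eq hA l
    have h4 : z ⬝ᵥ l = l ⬝ᵥ z := dotProduct_comm _ _
    rw [sub_dotProduct, mulVec_sub, dotProduct_sub, dotProduct_sub, h1, h2, h3, h4]
    ring
  linarith [hexp ▸ h0]

lemma quad_zero {n : ℕ} {A : Matrix (Fin n) (Fin n) ℝ} (hA : A.PosDef) {v : Fin n → ℝ}
    (h : v ⬝ᵥ (A *ᵥ v) = 0) : v = 0 := by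
  by_contra hv
  exact absurd h (ne_of_gt (by simpa only [star_trivial] using hA.dotProduct_mulVec_pos hv))

section Machinery

variable {d m p q : ℕ} (Atil : Matrix (Fin d) (Fin d) ℝ)
    (Btil : Matrix (Fin d) (Fin m) ℝ) (Gtil : Matrix (Fin d) (Fin p) ℝ)
    (C : ℕ → Matrix (Fin q) (Fin d) ℝ)
    (u : ℕ → Fin m → ℝ) (y : ℕ → Fin q → ℝ)
    (P0 : Matrix (Fin d) (Fin d) ℝ)
    (Q : ℕ → Matrix (Fin p) (Fin p) ℝ) (R : ℕ → Matrix (Fin q) (Fin q) ℝ)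
    (xhat0 : Fin d → ℝ)

/-- Truncation of a horizon-`k+1` tuple to horizon `k`. -/
def MEtrunc {k : ℕ}
    (t : (Fin (k + 2) → Fin d → ℝ) × (Fin (k+1) → Fin p → ℝ) × (Fin (k+1) → Fin q → ℝ)) :
    (Fin (k + 1) → Fin d → ℝ) × (Fin k → Fin p → ℝ) × (Fin k → Fin q → ℝ) :=
  (fun i => t.1 i.castSucc, fun i => t.2.1 i.castSucc, fun i => t.2.2 i.castSucc)

/-- Extension of a horizon-`k` tuple to horizon `k+1`. -/
def MEext {k : ℕ}
    (t : (Fin (k + 1) → Fin d → ℝ) × (Fin k → Fin p → ℝ) × (Fin k → Fin q → ℝ))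
    (x : Fin d → ℝ) (r : Fin p → ℝ) (v : Fin q → ℝ) :
    (Fin (k + 2) → Fin d → ℝ) × (Fin (k+1) → Fin p → ℝ) × (Fin (k+1) → Fin q → ℝ) :=
  (Fin.snoc t.1 x, Fin.snoc t.2.1 r, Fin.snoc t.2.2 v)

lemma MEtrunc_feasible {k : ℕ} {t}
    (ht : MEFeasible Atil Btil Gtil C u y (k+1) t) :
    MEFeasible Atil Btil Gtil C u y k (MEtrunc t) := by
  constructor
  · intro i
    have h := ht.1 i.castSucc
    simpa [MEtrunc, ← Fin.succ_castSucc] using h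
  · intro i
    have h := ht.2 i.castSucc
    simpa [MEtrunc] using h

lemma MEtrunc_energy {k : ℕ}
    (t : (Fin (k + 2) → Fin d → ℝ) × (Fin (k+1) → Fin p → ℝ) × (Fin (k+1) → Fin q → ℝ)) :
    MEEnergy P0 Q R xhat0 (k+1) t = MEEnergy P0 Q R xhat0 k (MEtrunc t)
      + t.2.1 (Fin.last k) ⬝ᵥ ((Q k)⁻¹ *ᵥ t.2.1 (Fin.last k))
      + t.2.2 (Fin.last k) ⬝ᵥ ((R (k+1))⁻¹ *ᵥ t.2.2 (Fin.last k)) := by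
  unfold MEEnergy MEtrunc
  rw [Fin.sum_univ_castSucc (n := k) (f := fun i : Fin (k+1) => t.2.1 i ⬝ᵥ ((Q (i:ℕ))⁻¹ *ᵥ t.2.1 i))]
  rw [Fin.sum_univ_castSucc (n := k) (f := fun i : Fin (k+1) => t.2.2 i ⬝ᵥ ((R ((i:ℕ)+1))⁻¹ *ᵥ t.2.2 i))]
  simp [Fin.val_last]
  ring

lemma MEext_feasible {k : ℕ} {t}
    (ht : MEFeasible Atil Btil Gtil C u y k t) (x : Fin d → ℝ) (r : Fin p → ℝ) (v : Fin q → ℝ)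
    (hx : x = Atil *ᵥ (t.1 (Fin.last k)) + Btil *ᵥ (u k) + Gtil *ᵥ r)
    (hv : y (k+1) = (C (k+1)) *ᵥ x + v) :
    MEFeasible Atil Btil Gtil C u y (k+1) (MEext t x r v) := by
  constructor
  · intro i
    induction i using Fin.lastCases with
    | last =>
      simpa [MEext, Fin.succ_last, Fin.snoc_last, Fin.snoc_castSucc, Fin.val_last] using hx
    | cast j =>
      have h := ht.1 j
      simpa only [MEext, Fin.succ_castSucc, Fin.snoc_castSucc, Fin.coe_castSucc] using h
  · intro i
    induction i using Fin.lastCases with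
    | last =>
      simpa [MEext, Fin.succ_last, Fin.snoc_last, Fin.val_last] using hv
    | cast j =>
      have h := ht.2 j
      simpa only [MEext, Fin.succ_castSucc, Fin.snoc_castSucc, Fin.coe_castSucc] using h

lemma MEtrunc_ext {k : ℕ} (t : (Fin (k + 1) → Fin d → ℝ) × (Fin k → Fin p → ℝ) × (Fin k → Fin q → ℝ))
    (x : Fin d → ℝ) (r : Fin p → ℝ) (v : Fin q → ℝ) :
    MEtrunc (MEext t x r v) = t := by
  unfold MEtrunc MEext
  refine Prod.ext ?_ (Prod.ext ?_ ?_) <;> simp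

lemma MEext_energy {k : ℕ}
    (t : (Fin (k + 1) → Fin d → ℝ) × (Fin k → Fin p → ℝ) × (Fin k → Fin q → ℝ))
    (x : Fin d → ℝ) (r : Fin p → ℝ) (v : Fin q → ℝ) :
    MEEnergy P0 Q R xhat0 (k+1) (MEext t x r v) = MEEnergy P0 Q R xhat0 k t
      + r ⬝ᵥ ((Q k)⁻¹ *ᵥ r) + v ⬝ᵥ ((R (k+1))⁻¹ *ᵥ v) := by
  rw [MEtrunc_energy, MEtrunc_ext]
  simp [MEext]

lemma MEext_last {k : ℕ}
    (t : (Fin (k + 1) → Fin d → ℝ) × (Fin k → Fin p → ℝ) × (Fin k → Fin q → ℝ))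
    (x : Fin d → ℝ) (r : Fin p → ℝ) (v : Fin q → ℝ) :
    (MEext t x r v).1 (Fin.last (k+1)) = x := by
  simp [MEext]

/-- A feasible tuple is determined by its initial state and disturbance sequence. -/
lemma ME_determined {k : ℕ} {t t'}
    (ht : MEFeasible Atil Btil Gtil C u y k t) (ht' : MEFeasible Atil Btil Gtil C u y k t')
    (h0 : t.1 0 = t'.1 0) (hr : t.2.1 = t'.2.1) : t = t' := by
  have hx : ∀ i : Fin (k+1), t.1 i = t'.1 i := by
    intro i
    induction i using Fin.induction with
    | zero => exact h0
    | succ j ih =>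
      rw [ht.1 j, ht'.1 j, ih, hr]
  have hv : ∀ i : Fin k, t.2.2 i = t'.2.2 i := by
    intro i
    have h1 := ht.2 i
    have h2 := ht'.2 i
    have := h1.symm.trans h2
    rw [hx i.succ] at this
    exact (add_right_injective _ this).symm ▸ rfl
  refine Prod.ext (funext hx) (Prod.ext (by rw [hr]) (funext hv))
end Machinery

lemma quad_mid {n : ℕ} {A : Matrix (Fin n) (Fin n) ℝ} (hA : Aᵀ = A) (a b : Fin n → ℝ) :
    ((1/2:ℝ) • (a+b)) ⬝ᵥ (A *ᵥ ((1/2:ℝ) • (a+b)))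
      + ((1/2:ℝ) • (a-b)) ⬝ᵥ (A *ᵥ ((1/2:ℝ) • (a-b)))
    = (1/2) * (a ⬝ᵥ (A *ᵥ a)) + (1/2) * (b ⬝ᵥ (A *ᵥ b)) := by
  have hs : b ⬝ᵥ (A *ᵥ a) = a ⬝ᵥ (A *ᵥ b) := dp_symm hA b a
  simp only [smul_dotProduct, mulVec_smul, dotProduct_smul, mulVec_add, mulVec_sub,
    dotProduct_add, dotProduct_sub, add_dotProduct, sub_dotProduct, smul_eq_mul]
  rw [hs]
  ring

section Mid

variable {d m p q : ℕ} (Atil : Matrix (Fin d) (Fin d) ℝ)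
    (Btil : Matrix (Fin d) (Fin m) ℝ) (Gtil : Matrix (Fin d) (Fin p) ℝ)
    (C : ℕ → Matrix (Fin q) (Fin d) ℝ)
    (u : ℕ → Fin m → ℝ) (y : ℕ → Fin q → ℝ)
    (P0 : Matrix (Fin d) (Fin d) ℝ)
    (Q : ℕ → Matrix (Fin p) (Fin p) ℝ) (R : ℕ → Matrix (Fin q) (Fin q) ℝ)
    (xhat0 : Fin d → ℝ)

/-- Midpoint of two tuples. -/
noncomputable def MEmid {k : ℕ}
    (t t' : (Fin (k + 1) → Fin d → ℝ) × (Fin k → Fin p → ℝ) × (Fin k → Fin q → ℝ)) :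
    (Fin (k + 1) → Fin d → ℝ) × (Fin k → Fin p → ℝ) × (Fin k → Fin q → ℝ) :=
  (fun i => (1/2:ℝ) • (t.1 i + t'.1 i), fun i => (1/2:ℝ) • (t.2.1 i + t'.2.1 i),
    fun i => (1/2:ℝ) • (t.2.2 i + t'.2.2 i))

lemma MEmid_feasible {k : ℕ} {t t'}
    (ht : MEFeasible Atil Btil Gtil C u y k t) (ht' : MEFeasible Atil Btil Gtil C u y k t') :
    MEFeasible Atil Btil Gtil C u y k (MEmid t t') := by
  constructor
  · intro i
    show (1/2:ℝ) • (t.1 i.succ + t'.1 i.succ)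
      = Atil *ᵥ ((1/2:ℝ) • (t.1 i.castSucc + t'.1 i.castSucc)) + Btil *ᵥ u i
        + Gtil *ᵥ ((1/2:ℝ) • (t.2.1 i + t'.2.1 i))
    rw [ht.1 i, ht'.1 i, mulVec_smul, mulVec_smul, mulVec_add, mulVec_add]
    module
  · intro i
    show y ((i:ℕ)+1)
      = (C ((i:ℕ)+1)) *ᵥ ((1/2:ℝ) • (t.1 i.succ + t'.1 i.succ))
        + (1/2:ℝ) • (t.2.2 i + t'.2.2 i)
    rw [mulVec_smul, mulVec_add, ht.2 i]
    have h12 : (C ((i:ℕ)+1)) *ᵥ t'.1 i.succ + t'.2.2 i = (C ((i:ℕ)+1)) *ᵥ t.1 i.succ + t.2.2 i :=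
      (ht'.2 i).symm.trans (ht.2 i)
    have h3 : (C ((i:ℕ)+1)) *ᵥ t'.1 i.succ = (C ((i:ℕ)+1)) *ᵥ t.1 i.succ + t.2.2 i - t'.2.2 i := by
      rw [← h12]; abel
    rw [h3]
    module

lemma MEmid_energy {k : ℕ} (hsP : (P0⁻¹)ᵀ = P0⁻¹)
    (hsQ : ∀ i : Fin k, ((Q (i:ℕ))⁻¹)ᵀ = (Q (i:ℕ))⁻¹)
    (hsR : ∀ i : Fin k, ((R ((i:ℕ)+1))⁻¹)ᵀ = (R ((i:ℕ)+1))⁻¹)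
    (t t' : (Fin (k + 1) → Fin d → ℝ) × (Fin k → Fin p → ℝ) × (Fin k → Fin q → ℝ)) :
    MEEnergy P0 Q R xhat0 k (MEmid t t')
      + ((∑ i : Fin k, ((1/2:ℝ) • (t.2.1 i - t'.2.1 i)) ⬝ᵥ ((Q (i:ℕ))⁻¹ *ᵥ ((1/2:ℝ) • (t.2.1 i - t'.2.1 i))))
        + (∑ i : Fin k, ((1/2:ℝ) • (t.2.2 i - t'.2.2 i)) ⬝ᵥ ((R ((i:ℕ)+1))⁻¹ *ᵥ ((1/2:ℝ) • (t.2.2 i - t'.2.2 i))))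
        + ((1/2:ℝ) • (t.1 0 - t'.1 0)) ⬝ᵥ (P0⁻¹ *ᵥ ((1/2:ℝ) • (t.1 0 - t'.1 0))))
    = (1/2) * MEEnergy P0 Q R xhat0 k t + (1/2) * MEEnergy P0 Q R xhat0 k t' := by
  unfold MEEnergy MEmid
  have hr : ∀ i : Fin k,
      ((1/2:ℝ) • (t.2.1 i + t'.2.1 i)) ⬝ᵥ ((Q (i:ℕ))⁻¹ *ᵥ ((1/2:ℝ) • (t.2.1 i + t'.2.1 i)))
      + ((1/2:ℝ) • (t.2.1 i - t'.2.1 i)) ⬝ᵥ ((Q (i:ℕ))⁻¹ *ᵥ ((1/2:ℝ) • (t.2.1 i - t'.2.1 i)))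
      = (1/2) * (t.2.1 i ⬝ᵥ ((Q (i:ℕ))⁻¹ *ᵥ t.2.1 i)) + (1/2) * (t'.2.1 i ⬝ᵥ ((Q (i:ℕ))⁻¹ *ᵥ t'.2.1 i)) :=
    fun i => quad_mid (hsQ i) _ _
  have hv : ∀ i : Fin k,
      ((1/2:ℝ) • (t.2.2 i + t'.2.2 i)) ⬝ᵥ ((R ((i:ℕ)+1))⁻¹ *ᵥ ((1/2:ℝ) • (t.2.2 i + t'.2.2 i)))
      + ((1/2:ℝ) • (t.2.2 i - t'.2.2 i)) ⬝ᵥ ((R ((i:ℕ)+1))⁻¹ *ᵥ ((1/2:ℝ) • (t.2.2 i - t'.2.2 i)))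
      = (1/2) * (t.2.2 i ⬝ᵥ ((R ((i:ℕ)+1))⁻¹ *ᵥ t.2.2 i)) + (1/2) * (t'.2.2 i ⬝ᵥ ((R ((i:ℕ)+1))⁻¹ *ᵥ t'.2.2 i)) :=
    fun i => quad_mid (hsR i) _ _
  have hx0 : ((1/2:ℝ) • (t.1 0 + t'.1 0) - xhat0) = (1/2:ℝ) • ((t.1 0 - xhat0) + (t'.1 0 - xhat0)) := by
    module
  have hd0 : ((1/2:ℝ) • (t.1 0 - t'.1 0)) = (1/2:ℝ) • ((t.1 0 - xhat0) - (t'.1 0 - xhat0)) := by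
    module
  have hp := quad_mid hsP (t.1 0 - xhat0) (t'.1 0 - xhat0)
  rw [hx0, hd0]
  have HQ : (∑ i : Fin k, ((1/2:ℝ) • (t.2.1 i + t'.2.1 i)) ⬝ᵥ ((Q (i:ℕ))⁻¹ *ᵥ ((1/2:ℝ) • (t.2.1 i + t'.2.1 i))))
      + (∑ i : Fin k, ((1/2:ℝ) • (t.2.1 i - t'.2.1 i)) ⬝ᵥ ((Q (i:ℕ))⁻¹ *ᵥ ((1/2:ℝ) • (t.2.1 i - t'.2.1 i))))
      = (1/2) * (∑ i : Fin k, t.2.1 i ⬝ᵥ ((Q (i:ℕ))⁻¹ *ᵥ t.2.1 i))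
        + (1/2) * (∑ i : Fin k, t'.2.1 i ⬝ᵥ ((Q (i:ℕ))⁻¹ *ᵥ t'.2.1 i)) := by
    rw [← Finset.sum_add_distrib, Finset.sum_congr rfl (fun i _ => hr i),
      Finset.sum_add_distrib, ← Finset.mul_sum, ← Finset.mul_sum]
  have HR : (∑ i : Fin k, ((1/2:ℝ) • (t.2.2 i + t'.2.2 i)) ⬝ᵥ ((R ((i:ℕ)+1))⁻¹ *ᵥ ((1/2:ℝ) • (t.2.2 i + t'.2.2 i))))
      + (∑ i : Fin k, ((1/2:ℝ) • (t.2.2 i - t'.2.2 i)) ⬝ᵥ ((R ((i:ℕ)+1))⁻¹ *ᵥ ((1/2:ℝ) • (t.2.2 i - t'.2.2 i))))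
      = (1/2) * (∑ i : Fin k, t.2.2 i ⬝ᵥ ((R ((i:ℕ)+1))⁻¹ *ᵥ t.2.2 i))
        + (1/2) * (∑ i : Fin k, t'.2.2 i ⬝ᵥ ((R ((i:ℕ)+1))⁻¹ *ᵥ t'.2.2 i)) := by
    rw [← Finset.sum_add_distrib, Finset.sum_congr rfl (fun i _ => hv i),
      Finset.sum_add_distrib, ← Finset.mul_sum, ← Finset.mul_sum]
  linarith [HQ, HR, hp]

end Mid

section Unique

variable {d m p q : ℕ} {Atil : Matrix (Fin d) (Fin d) ℝ}
    {Btil : Matrix (Fin d) (Fin m) ℝ} {Gtil : Matrix (Fin d) (Fin p) ℝ}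
    {C : ℕ → Matrix (Fin q) (Fin d) ℝ}
    {u : ℕ → Fin m → ℝ} {y : ℕ → Fin q → ℝ}
    {P0 : Matrix (Fin d) (Fin d) ℝ}
    {Q : ℕ → Matrix (Fin p) (Fin p) ℝ} {R : ℕ → Matrix (Fin q) (Fin q) ℝ}
    {xhat0 : Fin d → ℝ}

lemma ME_unique {k : ℕ} (hP0 : P0.PosDef)
    (hQ : ∀ i : Fin k, (Q (i:ℕ)).PosDef) (hR : ∀ i : Fin k, (R ((i:ℕ)+1)).PosDef)
    {t t'} (ht : MEFeasible Atil Btil Gtil C u y k t) (ht' : MEFeasible Atil Btil Gtil C u y k t')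
    (hmt : ∀ s, MEFeasible Atil Btil Gtil C u y k s →
      MEEnergy P0 Q R xhat0 k t ≤ MEEnergy P0 Q R xhat0 k s)
    (hmt' : ∀ s, MEFeasible Atil Btil Gtil C u y k s →
      MEEnergy P0 Q R xhat0 k t' ≤ MEEnergy P0 Q R xhat0 k s) :
    t = t' := by
  have hmid := MEmid_feasible Atil Btil Gtil C u y ht ht'
  have h1 := hmt _ hmid
  have h2 := hmt' _ hmid
  have hE := MEmid_energy P0 Q R xhat0 (pd_inv_symm hP0)
    (fun i => pd_inv_symm (hQ i)) (fun i => pd_inv_symm (hR i)) t t'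
  set DQ := ∑ i : Fin k, ((1/2:ℝ) • (t.2.1 i - t'.2.1 i)) ⬝ᵥ ((Q (i:ℕ))⁻¹ *ᵥ ((1/2:ℝ) • (t.2.1 i - t'.2.1 i))) with hDQ
  set DR := ∑ i : Fin k, ((1/2:ℝ) • (t.2.2 i - t'.2.2 i)) ⬝ᵥ ((R ((i:ℕ)+1))⁻¹ *ᵥ ((1/2:ℝ) • (t.2.2 i - t'.2.2 i))) with hDR
  set DP := ((1/2:ℝ) • (t.1 0 - t'.1 0)) ⬝ᵥ (P0⁻¹ *ᵥ ((1/2:ℝ) • (t.1 0 - t'.1 0))) with hDP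
  have hQnn : ∀ i : Fin k, (0:ℝ) ≤ ((1/2:ℝ) • (t.2.1 i - t'.2.1 i)) ⬝ᵥ ((Q (i:ℕ))⁻¹ *ᵥ ((1/2:ℝ) • (t.2.1 i - t'.2.1 i))) :=
    fun i => by simpa only [star_trivial] using (hQ i).inv.posSemidef.dotProduct_mulVec_nonneg _
  have hRnn : ∀ i : Fin k, (0:ℝ) ≤ ((1/2:ℝ) • (t.2.2 i - t'.2.2 i)) ⬝ᵥ ((R ((i:ℕ)+1))⁻¹ *ᵥ ((1/2:ℝ) • (t.2.2 i - t'.2.2 i))) :=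
    fun i => by simpa only [star_trivial] using (hR i).inv.posSemidef.dotProduct_mulVec_nonneg _
  have hDQnn : 0 ≤ DQ := Finset.sum_nonneg (fun i _ => hQnn i)
  have hDRnn : 0 ≤ DR := Finset.sum_nonneg (fun i _ => hRnn i)
  have hDPnn : 0 ≤ DP := by
    simpa only [star_trivial] using hP0.inv.posSemidef.dotProduct_mulVec_nonneg ((1/2:ℝ) • (t.1 0 - t'.1 0))
  have hDP0 : DP = 0 := by linarith
  have hDQ0 : DQ = 0 := by linarith
  have half_ne : (1/2:ℝ) ≠ 0 := by norm_num
  have hx0 : t.1 0 = t'.1 0 := by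
    have hz : (1/2:ℝ) • (t.1 0 - t'.1 0) = 0 := quad_zero hP0.inv hDP0
    have := (smul_eq_zero.mp hz).resolve_left half_ne
    exact sub_eq_zero.mp this
  have hrr : t.2.1 = t'.2.1 := by
    funext i
    have hall := (Finset.sum_eq_zero_iff_of_nonneg (fun i _ => hQnn i)).mp hDQ0
    have hz : (1/2:ℝ) • (t.2.1 i - t'.2.1 i) = 0 :=
      quad_zero (hQ i).inv (hall i (Finset.mem_univ i))
    have := (smul_eq_zero.mp hz).resolve_left half_ne
    exact sub_eq_zero.mp this
  exact ME_determined Atil Btil Gtil C u y ht ht' hx0 hrr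

end Unique

lemma herm_of_symm {n : ℕ} {A : Matrix (Fin n) (Fin n) ℝ} (h : Aᵀ = A) : A.IsHermitian := by
  ext i j
  simpa [conjTranspose_apply] using congrFun (congrFun h i) j

lemma ME_induction (d m p q N : ℕ)
    (Atil : Matrix (Fin d) (Fin d) ℝ) (Btil : Matrix (Fin d) (Fin m) ℝ)
    (Gtil : Matrix (Fin d) (Fin p) ℝ) (C : ℕ → Matrix (Fin q) (Fin d) ℝ)
    (u : ℕ → Fin m → ℝ) (y : ℕ → Fin q → ℝ)
    (xhat0 : Fin d → ℝ)
    (P0 : Matrix (Fin d) (Fin d) ℝ)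
    (Q : ℕ → Matrix (Fin p) (Fin p) ℝ) (R : ℕ → Matrix (Fin q) (Fin q) ℝ)
    (hP0 : P0.PosDef)
    (hQ : ∀ i : ℕ, i ≤ N - 1 → (Q i).PosDef)
    (hR : ∀ j : ℕ, 1 ≤ j → j ≤ N → (R j).PosDef)
    (P M : ℕ → Matrix (Fin d) (Fin d) ℝ) (Kg : ℕ → Matrix (Fin d) (Fin q) ℝ)
    (xhat : ℕ → Fin d → ℝ)
    (hPzero : P 0 = P0)
    (hxzero : xhat 0 = xhat0)
    (hM : ∀ k : ℕ, M (k + 1) = Atil * P k * Atilᵀ + Gtil * Q k * Gtilᵀ)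
    (hKg : ∀ k : ℕ, Kg (k + 1) =
      M (k + 1) * (C (k + 1))ᵀ * (C (k + 1) * M (k + 1) * (C (k + 1))ᵀ + R (k + 1))⁻¹)
    (hPrec : ∀ k : ℕ, P (k + 1) = (1 - Kg (k + 1) * C (k + 1)) * M (k + 1))
    (hxhat : ∀ k : ℕ, xhat (k + 1) =
      Atil.mulVec (xhat k) + Btil.mulVec (u k) +
        (Kg (k + 1)).mulVec
          (y (k + 1) - (C (k + 1)).mulVec (Atil.mulVec (xhat k) + Btil.mulVec (u k)))) :
    ∀ k : ℕ, k ≤ N →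
      (P k)ᵀ = P k ∧
      ∃ c : ℝ,
        (∀ t, MEFeasible Atil Btil Gtil C u y k t → ∀ l : Fin d → ℝ,
          c + (2 * (l ⬝ᵥ (t.1 (Fin.last k) - xhat k)) - l ⬝ᵥ (P k *ᵥ l))
            ≤ MEEnergy P0 Q R xhat0 k t) ∧
        (∀ ν : Fin d → ℝ, ∃ t, MEFeasible Atil Btil Gtil C u y k t ∧
          t.1 (Fin.last k) = xhat k + P k *ᵥ ν ∧
          MEEnergy P0 Q R xhat0 k t = c + ν ⬝ᵥ (P k *ᵥ ν)) := by
  intro k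
  induction k with
  | zero =>
    intro _
    refine ⟨by rw [hPzero]; exact pd_symm hP0, 0, ?_, ?_⟩
    · intro t ht l
      have hb := quad_lb hP0 (t.1 0 - xhat0) l
      have hE : MEEnergy P0 Q R xhat0 0 t
          = (t.1 0 - xhat0) ⬝ᵥ (P0⁻¹ *ᵥ (t.1 0 - xhat0)) := by
        simp [MEEnergy]
      have hlast : (Fin.last 0) = (0 : Fin 1) := rfl
      rw [hE, hlast, hxzero, hPzero]
      linarith
    · intro ν
      refine ⟨(fun _ => xhat0 + P0 *ᵥ ν, fun i => i.elim0, fun i => i.elim0),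
        ⟨fun i => i.elim0, fun i => i.elim0⟩, ?_, ?_⟩
      · show xhat0 + P0 *ᵥ ν = xhat 0 + P 0 *ᵥ ν
        rw [hxzero, hPzero]
      · have hE : MEEnergy P0 Q R xhat0 0
            ((fun _ => xhat0 + P0 *ᵥ ν, fun i => i.elim0, fun i => i.elim0) :
              (Fin 1 → Fin d → ℝ) × (Fin 0 → Fin p → ℝ) × (Fin 0 → Fin q → ℝ))
            = ((xhat0 + P0 *ᵥ ν) - xhat0) ⬝ᵥ (P0⁻¹ *ᵥ ((xhat0 + P0 *ᵥ ν) - xhat0)) := by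
          simp [MEEnergy]
        rw [hE, hPzero, add_sub_cancel_left, quad_eq hP0, zero_add]
  | succ k ih =>
    intro hk1
    obtain ⟨hPsymm, c, hi, hii⟩ := ih (by omega)
    have hQk : (Q k).PosDef := hQ k (by omega)
    have hRk : (R (k+1)).PosDef := hR (k+1) (by omega) hk1
    have hPk_psd : ∀ w0 : Fin d → ℝ, 0 ≤ w0 ⬝ᵥ (P k *ᵥ w0) := by
      intro w0
      obtain ⟨t, ht, _, hEn⟩ := hii w0
      have h0 := hi t ht 0
      simp only [zero_dotProduct, mul_zero, sub_zero, add_zero] at h0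
      rw [hEn] at h0
      linarith
    have hMsym : (M (k+1))ᵀ = M (k+1) := by
      rw [hM k]
      simp [transpose_add, transpose_mul, transpose_transpose, hPsymm, pd_symm hQk,
        Matrix.mul_assoc]
    have hMpsd : ∀ x : Fin d → ℝ, 0 ≤ x ⬝ᵥ (M (k+1) *ᵥ x) := by
      intro x
      have h1 : x ⬝ᵥ ((Atil * P k * Atilᵀ) *ᵥ x) = (Atilᵀ *ᵥ x) ⬝ᵥ (P k *ᵥ (Atilᵀ *ᵥ x)) := by
        rw [Matrix.mul_assoc, ← mulVec_mulVec, ← mulVec_mulVec]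
        exact (dp_transpose Atil x _).symm
      have h2 : x ⬝ᵥ ((Gtil * Q k * Gtilᵀ) *ᵥ x) = (Gtilᵀ *ᵥ x) ⬝ᵥ (Q k *ᵥ (Gtilᵀ *ᵥ x)) := by
        rw [Matrix.mul_assoc, ← mulVec_mulVec, ← mulVec_mulVec]
        exact (dp_transpose Gtil x _).symm
      rw [hM k, add_mulVec, dotProduct_add, h1, h2]
      exact add_nonneg (hPk_psd _) (by simpa only [star_trivial] using hQk.posSemidef.dotProduct_mulVec_nonneg _)
    set S := C (k+1) * M (k+1) * (C (k+1))ᵀ + R (k+1) with hSdef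
    have foldCM : ∀ vv : Fin q → ℝ, (C (k+1) * M (k+1) * (C (k+1))ᵀ) *ᵥ vv
        = C (k+1) *ᵥ (M (k+1) *ᵥ ((C (k+1))ᵀ *ᵥ vv)) := by
      intro vv
      rw [Matrix.mul_assoc, ← mulVec_mulVec, ← mulVec_mulVec]
    have hSpd : S.PosDef := by
      refine Matrix.PosDef.of_dotProduct_mulVec_pos ?_ ?_
      · refine herm_of_symm ?_
        rw [hSdef]
        simp [transpose_add, transpose_mul, transpose_transpose, hMsym, pd_symm hRk,
          Matrix.mul_assoc]
      · intro x hx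
        have hstar : star x = x := by
          funext i; simp
        show 0 < star x ⬝ᵥ S *ᵥ x
        rw [hstar, hSdef, add_mulVec, dotProduct_add, foldCM]
        have h1 : 0 ≤ x ⬝ᵥ (C (k+1) *ᵥ (M (k+1) *ᵥ ((C (k+1))ᵀ *ᵥ x))) := by
          rw [← dp_transpose]
          exact hMpsd _
        have h2 : 0 < x ⬝ᵥ (R (k+1) *ᵥ x) := by
          have := hRk.dotProduct_mulVec_pos hx
          simpa using this
        linarith
    have hSisym : (S⁻¹)ᵀ = S⁻¹ := pd_inv_symm hSpd
    have hKg' : Kg (k+1) = M (k+1) * (C (k+1))ᵀ * S⁻¹ := by rw [hSdef]; exact hKg k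
    have hP1 : P (k+1) = M (k+1) - Kg (k+1) * C (k+1) * M (k+1) := by
      rw [hPrec k, sub_mul, one_mul]
    have hP1sym : (P (k+1))ᵀ = P (k+1) := by
      rw [hP1, hKg']
      simp [transpose_sub, transpose_mul, transpose_transpose, hMsym, hSisym, Matrix.mul_assoc]
    have foldKg : ∀ vv : Fin q → ℝ, Kg (k+1) *ᵥ vv
        = M (k+1) *ᵥ ((C (k+1))ᵀ *ᵥ (S⁻¹ *ᵥ vv)) := by
      intro vv
      rw [hKg', Matrix.mul_assoc, ← mulVec_mulVec, ← mulVec_mulVec]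
    have hlKg : ∀ (l : Fin d → ℝ) (s : Fin q → ℝ), l ⬝ᵥ (Kg (k+1) *ᵥ s)
        = (C (k+1) *ᵥ (M (k+1) *ᵥ l)) ⬝ᵥ (S⁻¹ *ᵥ s) := by
      intro l s
      rw [foldKg, dp_symm hMsym, dp_transpose, dotProduct_comm]
    have hquadM : ∀ l : Fin d → ℝ,
        (Atilᵀ *ᵥ l) ⬝ᵥ (P k *ᵥ (Atilᵀ *ᵥ l)) + (Gtilᵀ *ᵥ l) ⬝ᵥ (Q k *ᵥ (Gtilᵀ *ᵥ l))
          = l ⬝ᵥ (M (k+1) *ᵥ l) := by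
      intro l
      rw [hM k, add_mulVec, dotProduct_add]
      congr 1
      · rw [Matrix.mul_assoc, ← mulVec_mulVec, ← mulVec_mulVec]
        exact dp_transpose Atil l _
      · rw [Matrix.mul_assoc, ← mulVec_mulVec, ← mulVec_mulVec]
        exact dp_transpose Gtil l _
    have hMvec : ∀ l : Fin d → ℝ,
        Atil *ᵥ (P k *ᵥ (Atilᵀ *ᵥ l)) + Gtil *ᵥ (Q k *ᵥ (Gtilᵀ *ᵥ l)) = M (k+1) *ᵥ l := by
      intro l
      simp only [hM k, add_mulVec, Matrix.mul_assoc, ← mulVec_mulVec]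
    set mb := Atil *ᵥ xhat k + Btil *ᵥ u k with hmb
    set e := y (k+1) - C (k+1) *ᵥ mb with he
    have hxh : xhat (k+1) = mb + Kg (k+1) *ᵥ e := by
      rw [he, hmb]
      exact hxhat k
    refine ⟨hP1sym, c + e ⬝ᵥ (S⁻¹ *ᵥ e), ?_, ?_⟩
    · -- lower bound
      intro t ht l
      have htr := MEtrunc_feasible Atil Btil Gtil C u y ht
      set x' := t.1 (Fin.last k).castSucc with hx'
      set xx := t.1 (Fin.last (k+1)) with hxxdef
      have hstep := ht.1 (Fin.last k)
      simp only [Fin.succ_last, Fin.val_last] at hstep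
      rw [← hxxdef, ← hx'] at hstep
      have hout := ht.2 (Fin.last k)
      simp only [Fin.succ_last, Fin.val_last] at hout
      rw [← hxxdef] at hout
      set z := xx - mb with hz
      set a := C (k+1) *ᵥ (M (k+1) *ᵥ l) with ha
      set ρ := S⁻¹ *ᵥ (e - a) with hρ
      set μ := l + (C (k+1))ᵀ *ᵥ ρ with hμ
      have h1 := hi (MEtrunc t) htr (Atilᵀ *ᵥ μ)
      have hfold' : (MEtrunc t).1 (Fin.last k) = x' := by rw [hx']; rfl
      rw [hfold'] at h1
      have h2 := quad_lb hQk (t.2.1 (Fin.last k)) (Gtilᵀ *ᵥ μ)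
      have h3 := quad_lb hRk (t.2.2 (Fin.last k)) ρ
      have hEs := MEtrunc_energy P0 Q R xhat0 t
      have e1 : (Atilᵀ *ᵥ μ) ⬝ᵥ (x' - xhat k) + (Gtilᵀ *ᵥ μ) ⬝ᵥ (t.2.1 (Fin.last k))
          = μ ⬝ᵥ z := by
        rw [dp_transpose, dp_transpose, ← dotProduct_add]
        congr 1
        rw [hz, hstep, hmb, mulVec_sub]
        abel
      have e2 : μ ⬝ᵥ z = l ⬝ᵥ z + ρ ⬝ᵥ (C (k+1) *ᵥ z) := by
        rw [hμ, add_dotProduct, dp_transpose]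
      have e3 : t.2.2 (Fin.last k) = e - C (k+1) *ᵥ z := by
        rw [he, hz, mulVec_sub, hout]
        abel
      have e4 : xx - xhat (k+1) = z - Kg (k+1) *ᵥ e := by
        rw [hz, hxh]
        abel
      have e5 := hquadM μ
      have e6 : μ ⬝ᵥ (M (k+1) *ᵥ μ) = l ⬝ᵥ (M (k+1) *ᵥ l) + 2*(a ⬝ᵥ ρ)
          + ρ ⬝ᵥ ((C (k+1) * M (k+1) * (C (k+1))ᵀ) *ᵥ ρ) := by
        rw [hμ, add_dotProduct, mulVec_add, dotProduct_add, dotProduct_add]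
        have t1 : l ⬝ᵥ (M (k+1) *ᵥ ((C (k+1))ᵀ *ᵥ ρ)) = a ⬝ᵥ ρ := by
          rw [dp_symm hMsym, dp_transpose, ← ha, dotProduct_comm]
        have t2 : ((C (k+1))ᵀ *ᵥ ρ) ⬝ᵥ (M (k+1) *ᵥ l) = a ⬝ᵥ ρ := by
          rw [dp_transpose, ← ha, dotProduct_comm]
        have t3 : ((C (k+1))ᵀ *ᵥ ρ) ⬝ᵥ (M (k+1) *ᵥ ((C (k+1))ᵀ *ᵥ ρ))
            = ρ ⬝ᵥ ((C (k+1) * M (k+1) * (C (k+1))ᵀ) *ᵥ ρ) := by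
          rw [dp_transpose, ← foldCM]
        rw [t1, t2, t3]
        ring
      have e7 : ρ ⬝ᵥ ((C (k+1) * M (k+1) * (C (k+1))ᵀ) *ᵥ ρ) + ρ ⬝ᵥ (R (k+1) *ᵥ ρ)
          = ρ ⬝ᵥ (S *ᵥ ρ) := by
        rw [hSdef, add_mulVec, dotProduct_add]
      have e8 : ρ ⬝ᵥ (S *ᵥ ρ) = (e - a) ⬝ᵥ (S⁻¹ *ᵥ (e - a)) := by
        rw [hρ, cancel_inv_vec hSpd, dotProduct_comm]
      have e9 : (e - a) ⬝ᵥ (S⁻¹ *ᵥ (e - a))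
          = e ⬝ᵥ (S⁻¹ *ᵥ e) - 2*(a ⬝ᵥ (S⁻¹ *ᵥ e)) + a ⬝ᵥ (S⁻¹ *ᵥ a) := by
        rw [sub_dotProduct, mulVec_sub, dotProduct_sub, dotProduct_sub, dp_symm hSisym e a]
        ring
      have e10 : ρ ⬝ᵥ (t.2.2 (Fin.last k)) = ρ ⬝ᵥ e - ρ ⬝ᵥ (C (k+1) *ᵥ z) := by
        rw [e3, dotProduct_sub]
      have e11 : ρ ⬝ᵥ e = e ⬝ᵥ (S⁻¹ *ᵥ e) - a ⬝ᵥ (S⁻¹ *ᵥ e) := by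
        rw [hρ, dotProduct_comm, mulVec_sub, dotProduct_sub, dp_symm hSisym e a]
      have e12 : a ⬝ᵥ ρ = a ⬝ᵥ (S⁻¹ *ᵥ e) - a ⬝ᵥ (S⁻¹ *ᵥ a) := by
        rw [hρ, mulVec_sub, dotProduct_sub]
      have e13 : l ⬝ᵥ (Kg (k+1) *ᵥ e) = a ⬝ᵥ (S⁻¹ *ᵥ e) := by
        rw [hlKg l e, ← ha]
      have e14 : l ⬝ᵥ (P (k+1) *ᵥ l) = l ⬝ᵥ (M (k+1) *ᵥ l) - a ⬝ᵥ (S⁻¹ *ᵥ a) := by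
        rw [hP1, sub_mulVec, dotProduct_sub]
        congr 1
        have hf : (Kg (k+1) * C (k+1) * M (k+1)) *ᵥ l
            = Kg (k+1) *ᵥ (C (k+1) *ᵥ (M (k+1) *ᵥ l)) := by
          rw [Matrix.mul_assoc, ← mulVec_mulVec, ← mulVec_mulVec]
        rw [hf, hlKg l (C (k+1) *ᵥ (M (k+1) *ᵥ l))]
      rw [e4, dotProduct_sub, e13, e14, hEs]
      linarith [h1, h2, h3, e1, e2, e5, e6, e7, e8, e9, e10, e11, e12]
    · -- attainment
      intro ν
      set a := C (k+1) *ᵥ (M (k+1) *ᵥ ν) with ha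
      set ρ := S⁻¹ *ᵥ (e - a) with hρ
      set μ := ν + (C (k+1))ᵀ *ᵥ ρ with hμ
      obtain ⟨t', ht', hterm, hE'⟩ := hii (Atilᵀ *ᵥ μ)
      set r := Q k *ᵥ (Gtilᵀ *ᵥ μ) with hr
      set xn := Atil *ᵥ t'.1 (Fin.last k) + Btil *ᵥ u k + Gtil *ᵥ r with hxn
      set vn := y (k+1) - C (k+1) *ᵥ xn with hvn
      have hMv2 : M (k+1) *ᵥ μ = Kg (k+1) *ᵥ e + P (k+1) *ᵥ ν := by
        have f1 : (Kg (k+1) * C (k+1) * M (k+1)) *ᵥ ν = Kg (k+1) *ᵥ a := by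
          rw [Matrix.mul_assoc, ← mulVec_mulVec, ← mulVec_mulVec, ← ha]
        rw [hμ, mulVec_add, hρ, ← foldKg, mulVec_sub, hP1, sub_mulVec, f1]
        abel
      have hxn2 : xn = mb + M (k+1) *ᵥ μ := by
        rw [hxn, hterm, hr, mulVec_add, hmb, ← hMvec μ]
        abel
      refine ⟨MEext t' xn r vn,
        MEext_feasible Atil Btil Gtil C u y ht' xn r vn hxn ?_, ?_, ?_⟩
      · rw [hvn]; abel
      · rw [MEext_last, hxn2, hMv2, hxh]
        abel
      · rw [MEext_energy]
        have hEr : r ⬝ᵥ ((Q k)⁻¹ *ᵥ r) = (Gtilᵀ *ᵥ μ) ⬝ᵥ (Q k *ᵥ (Gtilᵀ *ᵥ μ)) := by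
          rw [hr]; exact quad_eq hQk _
        have hSρ : S *ᵥ ρ = e - a := by rw [hρ]; exact cancel_inv_vec hSpd _
        have hvnR : vn = R (k+1) *ᵥ ρ := by
          have hCM : C (k+1) *ᵥ (M (k+1) *ᵥ μ) = a + (S *ᵥ ρ - R (k+1) *ᵥ ρ) := by
            rw [hμ, mulVec_add, mulVec_add, ← ha, ← foldCM, hSdef, add_mulVec]
            abel
          rw [hvn, hxn2, mulVec_add, hCM, hSρ, he]
          abel
        have hEv : vn ⬝ᵥ ((R (k+1))⁻¹ *ᵥ vn) = ρ ⬝ᵥ (R (k+1) *ᵥ ρ) := by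
          rw [hvnR]; exact quad_eq hRk _
        rw [hE', hEr, hEv]
        have e5 := hquadM μ
        have e6 : μ ⬝ᵥ (M (k+1) *ᵥ μ) = ν ⬝ᵥ (M (k+1) *ᵥ ν) + 2*(a ⬝ᵥ ρ)
            + ρ ⬝ᵥ ((C (k+1) * M (k+1) * (C (k+1))ᵀ) *ᵥ ρ) := by
          rw [hμ, add_dotProduct, mulVec_add, dotProduct_add, dotProduct_add]
          have t1 : ν ⬝ᵥ (M (k+1) *ᵥ ((C (k+1))ᵀ *ᵥ ρ)) = a ⬝ᵥ ρ := by
            rw [dp_symm hMsym, dp_transpose, ← ha, dotProduct_comm]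
          have t2 : ((C (k+1))ᵀ *ᵥ ρ) ⬝ᵥ (M (k+1) *ᵥ ν) = a ⬝ᵥ ρ := by
            rw [dp_transpose, ← ha, dotProduct_comm]
          have t3 : ((C (k+1))ᵀ *ᵥ ρ) ⬝ᵥ (M (k+1) *ᵥ ((C (k+1))ᵀ *ᵥ ρ))
              = ρ ⬝ᵥ ((C (k+1) * M (k+1) * (C (k+1))ᵀ) *ᵥ ρ) := by
            rw [dp_transpose, ← foldCM]
          rw [t1, t2, t3]
          ring
        have e7 : ρ ⬝ᵥ ((C (k+1) * M (k+1) * (C (k+1))ᵀ) *ᵥ ρ) + ρ ⬝ᵥ (R (k+1) *ᵥ ρ)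
            = ρ ⬝ᵥ (S *ᵥ ρ) := by
          rw [hSdef, add_mulVec, dotProduct_add]
        have e8 : ρ ⬝ᵥ (S *ᵥ ρ) = (e - a) ⬝ᵥ (S⁻¹ *ᵥ (e - a)) := by
          rw [hρ, cancel_inv_vec hSpd, dotProduct_comm]
        have e9 : (e - a) ⬝ᵥ (S⁻¹ *ᵥ (e - a))
            = e ⬝ᵥ (S⁻¹ *ᵥ e) - 2*(a ⬝ᵥ (S⁻¹ *ᵥ e)) + a ⬝ᵥ (S⁻¹ *ᵥ a) := by
          rw [sub_dotProduct, mulVec_sub, dotProduct_sub, dotProduct_sub, dp_symm hSisym e a]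
          ring
        have e12 : a ⬝ᵥ ρ = a ⬝ᵥ (S⁻¹ *ᵥ e) - a ⬝ᵥ (S⁻¹ *ᵥ a) := by
          rw [hρ, mulVec_sub, dotProduct_sub]
        have e14 : ν ⬝ᵥ (P (k+1) *ᵥ ν) = ν ⬝ᵥ (M (k+1) *ᵥ ν) - a ⬝ᵥ (S⁻¹ *ᵥ a) := by
          rw [hP1, sub_mulVec, dotProduct_sub]
          congr 1
          have hf : (Kg (k+1) * C (k+1) * M (k+1)) *ᵥ ν
              = Kg (k+1) *ᵥ (C (k+1) *ᵥ (M (k+1) *ᵥ ν)) := by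
            rw [Matrix.mul_assoc, ← mulVec_mulVec, ← mulVec_mulVec]
          rw [hf, hlKg ν (C (k+1) *ᵥ (M (k+1) *ᵥ ν))]
        rw [e14]
        linarith [e5, e6, e7, e8, e9, e12]

/-- Minimum-energy state estimation for a linear (ν-approximated fractional-order) system:
for every horizon `1 ≤ k ≤ N`, the weighted least-squares energy has a unique minimizer
over feasible tuples, and the terminal state of the minimizer coincides with the recursively
computed minimum-energy estimate `x̂[k]`. -/
theorem minimum_energy_estimator (d m p q N : ℕ)
    (Atil : Matrix (Fin d) (Fin d) ℝ) (Btil : Matrix (Fin d) (Fin m) ℝ)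
    (Gtil : Matrix (Fin d) (Fin p) ℝ) (C : ℕ → Matrix (Fin q) (Fin d) ℝ)
    (u : ℕ → Fin m → ℝ) (y : ℕ → Fin q → ℝ)
    (xhat0 : Fin d → ℝ)
    (P0 : Matrix (Fin d) (Fin d) ℝ)
    (Q : ℕ → Matrix (Fin p) (Fin p) ℝ) (R : ℕ → Matrix (Fin q) (Fin q) ℝ)
    (hP0 : P0.PosDef)
    (hQ : ∀ i : ℕ, i ≤ N - 1 → (Q i).PosDef)
    (hR : ∀ j : ℕ, 1 ≤ j → j ≤ N → (R j).PosDef)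
    -- the recursively defined estimator
    (P M : ℕ → Matrix (Fin d) (Fin d) ℝ) (Kg : ℕ → Matrix (Fin d) (Fin q) ℝ)
    (xhat : ℕ → Fin d → ℝ)
    (hPzero : P 0 = P0)
    (hxzero : xhat 0 = xhat0)
    (hM : ∀ k : ℕ, M (k + 1) = Atil * P k * Atilᵀ + Gtil * Q k * Gtilᵀ)
    (hKg : ∀ k : ℕ, Kg (k + 1) =
      M (k + 1) * (C (k + 1))ᵀ * (C (k + 1) * M (k + 1) * (C (k + 1))ᵀ + R (k + 1))⁻¹)
    (hP : ∀ k : ℕ, P (k + 1) = (1 - Kg (k + 1) * C (k + 1)) * M (k + 1))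
    (hxhat : ∀ k : ℕ, xhat (k + 1) =
      Atil.mulVec (xhat k) + Btil.mulVec (u k) +
        (Kg (k + 1)).mulVec
          (y (k + 1) - (C (k + 1)).mulVec (Atil.mulVec (xhat k) + Btil.mulVec (u k)))) :
    ∀ k : ℕ, 1 ≤ k → k ≤ N →
      (∃! t : (Fin (k + 1) → Fin d → ℝ) × (Fin k → Fin p → ℝ) × (Fin k → Fin q → ℝ),
        MEFeasible Atil Btil Gtil C u y k t ∧
          ∀ t', MEFeasible Atil Btil Gtil C u y k t' →
            MEEnergy P0 Q R xhat0 k t ≤ MEEnergy P0 Q R xhat0 k t') ∧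
      (∀ t : (Fin (k + 1) → Fin d → ℝ) × (Fin k → Fin p → ℝ) × (Fin k → Fin q → ℝ),
        (MEFeasible Atil Btil Gtil C u y k t ∧
          ∀ t', MEFeasible Atil Btil Gtil C u y k t' →
            MEEnergy P0 Q R xhat0 k t ≤ MEEnergy P0 Q R xhat0 k t') →
        t.1 (Fin.last k) = xhat k) := by
  intro k hk1 hkN
  obtain ⟨hPs, c, hi, hii⟩ := ME_induction d m p q N Atil Btil Gtil C u y xhat0 P0 Q R
    hP0 hQ hR P M Kg xhat hPzero hxzero hM hKg hP hxhat k hkN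
  obtain ⟨tstar, htstar, hterm, hE⟩ := hii 0
  have hterm0 : tstar.1 (Fin.last k) = xhat k := by
    rw [hterm, mulVec_zero, add_zero]
  have hE0 : MEEnergy P0 Q R xhat0 k tstar = c := by
    rw [hE, zero_dotProduct, add_zero]
  have hmin : ∀ t', MEFeasible Atil Btil Gtil C u y k t' →
      MEEnergy P0 Q R xhat0 k tstar ≤ MEEnergy P0 Q R xhat0 k t' := by
    intro t' ht'
    have h := hi t' ht' 0
    simp only [zero_dotProduct, mul_zero, sub_zero, add_zero] at h
    rw [hE0]
    linarith
  have hQ' : ∀ i : Fin k, (Q (i:ℕ)).PosDef := fun i => hQ i (by have := i.isLt; omega)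
  have hR' : ∀ i : Fin k, (R ((i:ℕ)+1)).PosDef :=
    fun i => hR ((i:ℕ)+1) (by omega) (by have := i.isLt; omega)
  constructor
  · exact ⟨tstar, ⟨htstar, hmin⟩,
      fun t ht => ME_unique hP0 hQ' hR' ht.1 htstar ht.2 hmin⟩
  · rintro t ⟨ht, hmt⟩
    rw [ME_unique hP0 hQ' hR' ht htstar hmt hmin, hterm0]
end
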